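/- arXiv:1707.00328 — 2 statements merged into one kernel-verified Lean document; each statement's English description precedes it below -/
import Mathlib

section
/- Let V be a vertex ring with canonical Hasse-Schmidt derivation D_m(u) = u(-m-1)𝟙. Then for all u ∈ V, i ≥ 0, and n ∈ ℤ, the mode identity (D_i u)(n) = (-1)^i * C(n, i) * u(n - i) holds as endomorphisms of V. -/
noncomputable section

/-- Binomial coefficient `C(m, n)` for integer `m` and natural `n`:
`C(m,n) = m(m-1)⋯(m-n+1)/n!`. -/
def ibin (m : ℤ) (n : ℕ) : ℤ :=
  if 0 ≤ m then ((m.toNat.choose n : ℕ) : ℤ)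
  else (-1) ^ n * ((((n : ℤ) - m - 1).toNat.choose n : ℕ) : ℤ)

/-- Binomial coefficient `C(m, n)` for integers `m, n`, zero when `n < 0`. -/
def ibinZ (m n : ℤ) : ℤ := if 0 ≤ n then ibin m n.toNat else 0

/-- A vertex ring structure on an additive abelian group `V`: biadditive
products `mul n u v = u(n)v` for all `n : ℤ`, a vacuum element `one = 𝟙`,
satisfying truncation, the vacuum axioms, and the Jacobi identity. -/
structure VertexRing (V : Type*) [AddCommGroup V] where
  mul : ℤ → V → V → V
  one : V
  add_left : ∀ (n : ℤ) (u u' v : V), mul n (u + u') v = mul n u v + mul n u' v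
  add_right : ∀ (n : ℤ) (u v v' : V), mul n u (v + v') = mul n u v + mul n u v'
  trunc : ∀ u v : V, ∃ n₀ : ℤ, 0 ≤ n₀ ∧ ∀ n : ℤ, n₀ ≤ n → mul n u v = 0
  vac_create : ∀ u : V, mul (-1) u one = u
  vac_ann : ∀ (u : V) (n : ℤ), 0 ≤ n → mul n u one = 0
  jacobi : ∀ (r s t : ℤ) (u v w : V),
      (∑ᶠ i : ℕ, ibin r i • mul (r + s - (i : ℤ)) (mul (t + (i : ℤ)) u v) w) =
      (∑ᶠ i : ℕ, ((-1) ^ i * ibin t i) •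
        (mul (r + t - (i : ℤ)) u (mul (s + (i : ℤ)) v w)
          - (((-1 : ℤˣ) ^ t : ℤˣ) : ℤ) • mul (s + t - (i : ℤ)) v (mul (r + (i : ℤ)) u w)))

/-- The canonical Hasse–Schmidt derivation of a vertex ring: `D m u = u(-m-1)𝟙`. -/
def VertexRing.D {V : Type*} [AddCommGroup V] (R : VertexRing V) (m : ℕ) (u : V) : V :=
  R.mul (-(m : ℤ) - 1) u R.one

/-- The center of a vertex ring: states whose vertex operator is the constant
`u(-1)`, i.e. `u(n) = 0` for all `n ≠ -1`. -/
def VertexRing.center {V : Type*} [AddCommGroup V] (R : VertexRing V) : Set V :=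
  {u | ∀ n : ℤ, n ≠ -1 → ∀ v : V, R.mul n u v = 0}

/-! The Jacobi identity with `t = 0` and `v = 𝟙` has vanishing left side, so the modes of `𝟙`
commute with all modes and `𝟙(m)x = x(-1)(𝟙(m)𝟙)`; a downward induction on `m ≤ -2` then shows
that `𝟙(m)` is the identity for `m = -1` and zero otherwise. The Jacobi identity with `r = 0`,
`t = -i - 1`, `v = 𝟙` writes `(D_i u)(n)` as a sum whose terms each contain a mode of `𝟙`, so at
most one term survives, and it is `(-1)^i C(n, i) u(n - i)`. -/

lemma ibin_zero_right (m : ℤ) : ibin m 0 = 1 := by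
  unfold ibin; split <;> simp

lemma ibin_zero_left {j : ℕ} (hj : j ≠ 0) : ibin 0 j = 0 := by
  simp [ibin, Nat.choose_eq_zero_of_lt (Nat.pos_of_ne_zero hj)]

lemma ibin_natCast (n j : ℕ) : ibin n j = n.choose j := by
  simp [ibin]

lemma ibin_neg_sub_one (k j : ℕ) : ibin (-k - 1) j = (-1) ^ j * ((j + k).choose j : ℤ) := by
  rw [ibin, if_neg (by omega), show ((j : ℤ) - (-k - 1) - 1).toNat = j + k by omega]

lemma neg_one_pow_mul_ibin_neg_sub_one (k j : ℕ) :
    (-1) ^ j * ibin (-k - 1) j = (j + k).choose j := by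
  rw [ibin_neg_sub_one, ← mul_assoc, ← mul_pow, neg_one_mul, neg_neg, one_pow, one_mul]

lemma units_neg_one_zpow_neg_sub_one (k : ℕ) :
    (((-1 : ℤˣ) ^ (-(k : ℤ) - 1) : ℤˣ) : ℤ) = (-1) ^ (k + 1) := by
  rw [show -(k : ℤ) - 1 = -((k + 1 : ℕ) : ℤ) by push_cast; ring, zpow_neg, zpow_natCast,
    ← inv_pow, inv_neg_one]
  push_cast
  rfl

namespace VertexRing

variable {V : Type*} [AddCommGroup V] (R : VertexRing V)

lemma mul_zero_left (n : ℤ) (v : V) : R.mul n 0 v = 0 := by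
  simpa using R.add_left n 0 0 v

lemma mul_zero_right (n : ℤ) (u : V) : R.mul n u 0 = 0 := by
  simpa using R.add_right n u 0 0

lemma mul_one_comm (r s : ℤ) (u w : V) :
    R.mul r u (R.mul s R.one w) = R.mul s R.one (R.mul r u w) := by
  have J := R.jacobi r s 0 u R.one w
  rw [finsum_eq_zero_of_forall_eq_zero (fun j => by
      rw [R.vac_ann u _ (by omega), R.mul_zero_left, smul_zero]),
    finsum_eq_single _ 0 (fun j hj => by rw [ibin_zero_left hj, mul_zero, zero_smul])] at J
  simpa [ibin_zero_right, sub_eq_zero] using J.symm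

lemma one_mode_eq (m : ℤ) (x : V) :
    R.mul m R.one x = R.mul (-1) x (R.mul m R.one R.one) := by
  rw [R.mul_one_comm, R.vac_create]

lemma one_mode_neg_one (x : V) : R.mul (-1) R.one x = x := by
  rw [R.one_mode_eq, R.vac_create, R.vac_create]

/-- The Jacobi identity with `s = 0`, `t = -1`, `v = w = 𝟙`. -/
lemma mul_one_eq_finsum (r : ℤ) (u : V) :
    R.mul r u R.one = ∑ᶠ j : ℕ, R.mul (-1 - j) R.one (R.mul (r + j) u R.one) := by
  have J := R.jacobi r 0 (-1) u R.one R.one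
  rw [finsum_eq_single _ 0 (fun j hj => by
      rw [R.vac_ann u _ (by omega), R.mul_zero_left, smul_zero])] at J
  simp only [ibin_zero_right, Nat.cast_zero, add_zero, sub_zero, R.vac_create, one_smul] at J
  rw [J]
  refine finsum_congr fun j => ?_
  have hsign := units_neg_one_zpow_neg_sub_one 0
  have hcoeff := neg_one_pow_mul_ibin_neg_sub_one 0 j
  simp only [Nat.cast_zero, neg_zero, zero_sub, zero_add, add_zero, Nat.choose_self,
    Nat.cast_one, pow_one] at hsign hcoeff
  rw [hsign, hcoeff, one_smul, R.vac_ann R.one _ (by omega), R.mul_zero_right, neg_one_smul,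
    sub_neg_eq_add, zero_add, show (0 : ℤ) + -1 - j = -1 - j by ring]

/-- In `mul_one_eq_finsum` for `u = 𝟙`, `r = -2 - k`, only the terms `j = 0` and `j = k + 1`
survive (the others by induction), and both equal `𝟙(r)𝟙`. -/
lemma one_mode_one_eq_zero (k : ℕ) : R.mul (-2 - k) R.one R.one = 0 := by
  induction k using Nat.strong_induction_on with
  | _ k ih =>
  set f : ℕ → V := fun j => R.mul (-1 - j) R.one (R.mul (-2 - k + j) R.one R.one)
  have hsupp : Function.support f ⊆ ({0, k + 1} : Finset ℕ) := by
    intro j hj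
    by_contra hj'
    simp only [Finset.coe_insert, Finset.coe_singleton, Set.mem_insert_iff,
      Set.mem_singleton_iff, not_or] at hj'
    apply hj
    rcases le_or_gt (k + 2) j with hbig | hsmall
    · simp only [f, R.vac_ann R.one (-2 - k + j) (by omega), R.mul_zero_right]
    · have := ih (k - j) (by omega)
      rw [show -2 - ((k - j : ℕ) : ℤ) = -2 - k + j by omega] at this
      simp only [f, this, R.mul_zero_right]
  have h := R.mul_one_eq_finsum (-2 - k) R.one
  rw [finsum_eq_sum_of_support_subset f hsupp, Finset.sum_pair (by omega)] at h
  simp only [f, Nat.cast_zero, sub_zero, add_zero, R.one_mode_neg_one, Nat.cast_add,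
    Nat.cast_one, show -2 - (k : ℤ) + (k + 1) = -1 by ring,
    show -1 - ((k : ℤ) + 1) = -2 - k by ring] at h
  exact left_eq_add.mp h

lemma one_mode_of_ne {m : ℤ} (hm : m ≠ -1) (x : V) : R.mul m R.one x = 0 := by
  rw [R.one_mode_eq]
  rcases le_or_gt 0 m with hm0 | hm0
  · rw [R.vac_ann R.one m hm0, R.mul_zero_right]
  · rw [show m = -2 - ((-2 - m).toNat : ℕ) by omega, R.one_mode_one_eq_zero, R.mul_zero_right]

lemma mul_D_eq_finsum (i : ℕ) (n : ℤ) (u v : V) :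
    R.mul n (R.D i u) v = ∑ᶠ j : ℕ, ((j + i).choose j : ℤ) •
      (R.mul (-i - 1 - j) u (R.mul (n + j) R.one v)
        + (-1) ^ i • R.mul (n - i - 1 - j) R.one (R.mul j u v)) := by
  have J := R.jacobi 0 n (-i - 1) u R.one v
  rw [finsum_eq_single _ 0 (fun j hj => by rw [ibin_zero_left hj, zero_smul])] at J
  simp only [ibin_zero_right, Nat.cast_zero, add_zero, zero_add, sub_zero, one_smul] at J
  rw [VertexRing.D, J]
  refine finsum_congr fun j => ?_
  rw [neg_one_pow_mul_ibin_neg_sub_one, units_neg_one_zpow_neg_sub_one, pow_succ, mul_neg_one,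
    neg_smul, sub_neg_eq_add, show n + (-i - 1) - j = n - i - 1 - j by ring]

end VertexRing

/-- Mode identity for the canonical HS derivation:
`(D_i u)(n) = (-1)^i C(n,i) u(n-i)`. -/
theorem mode_of_D {V : Type*} [AddCommGroup V] (R : VertexRing V)
    (u : V) (i : ℕ) (n : ℤ) (v : V) :
    R.mul n (R.D i u) v = ((-1) ^ i * ibin n i) • R.mul (n - (i : ℤ)) u v := by
  rw [R.mul_D_eq_finsum]
  rcases lt_or_ge n 0 with hn | hn
  · obtain ⟨k, rfl⟩ : ∃ k : ℕ, n = -k - 1 := ⟨(-1 - n).toNat, by omega⟩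
    rw [finsum_eq_single _ k fun j hj => by
      rw [R.one_mode_of_ne (by omega), R.one_mode_of_ne (by omega), R.mul_zero_right, smul_zero,
        add_zero, smul_zero]]
    rw [show -(k : ℤ) - 1 + k = -1 by ring, R.one_mode_neg_one, R.one_mode_of_ne (by omega),
      smul_zero, add_zero, neg_one_pow_mul_ibin_neg_sub_one, Nat.choose_symm_add, add_comm k i,
      show -(i : ℤ) - 1 - k = -k - 1 - i by ring]
  · lift n to ℕ using hn
    rcases le_or_gt i n with hin | hin
    · obtain ⟨k, rfl⟩ := Nat.exists_eq_add_of_le hin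
      rw [finsum_eq_single _ k fun j hj => by
        rw [R.one_mode_of_ne (by omega), R.one_mode_of_ne (by omega), R.mul_zero_right,
          smul_zero, zero_add, smul_zero]]
      rw [R.one_mode_of_ne (by omega), R.mul_zero_right, zero_add,
        show ((i + k : ℕ) : ℤ) - i - 1 - k = -1 by push_cast; ring, R.one_mode_neg_one,
        smul_smul, ibin_natCast, Nat.choose_symm_add, add_comm k i, mul_comm,
        show ((i + k : ℕ) : ℤ) - i = k by push_cast; ring]
    · rw [finsum_eq_zero_of_forall_eq_zero fun j => by
        rw [R.one_mode_of_ne (by omega), R.one_mode_of_ne (by omega), R.mul_zero_right,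
          smul_zero, zero_add, smul_zero]]
      rw [ibin_natCast, Nat.choose_eq_zero_of_lt hin, Nat.cast_zero, mul_zero, zero_smul]
end
end

section
/- Let V be a vertex ring. For states u, v ∈ V the following are equivalent: (a) the modes commute, [u(r), v(s)] = 0 for all r, s ∈ ℤ; (b) u(n)v = 0 for all n ≥ 0. -/
noncomputable section

/-! A vertex ring is its own vacuum module: `u(n)v = u(n)v(-1)𝟙`, so if the modes commute then
`u(n)v = v(-1)u(n)𝟙 = 0` for `n ≥ 0`. Conversely the Jacobi identity at `t = 0` is the commutator
formula `[u(r), v(s)] = ∑ᵢ C(r, i) (u(i)v)(r+s-i)`, whose right side vanishes when every `u(i)v` does. -/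

lemma ibin_zero_left_s7 {i : ℕ} (hi : i ≠ 0) : ibin 0 i = 0 := by
  simp [ibin, Nat.choose_eq_zero_of_lt (Nat.pos_of_ne_zero hi)]

namespace VertexRing

variable {V : Type*} [AddCommGroup V] (R : VertexRing V)

lemma mul_sub_mul_eq_finsum (r s : ℤ) (u v w : V) :
    R.mul r u (R.mul s v w) - R.mul s v (R.mul r u w)
      = ∑ᶠ i : ℕ, ibin r i • R.mul (r + s - (i : ℤ)) (R.mul (i : ℤ) u v) w := by
  have h := R.jacobi r s 0 u v w
  nth_rewrite 2 [finsum_eq_single _ 0 fun i hi => by rw [ibin_zero_left_s7 hi, mul_zero, zero_smul]] at h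
  have hbin : ibin 0 0 = 1 := by simp [ibin]
  simpa [hbin] using h.symm

lemma mul_eq_zero_of_commute {u v : V}
    (hcomm : ∀ (r s : ℤ) (w : V), R.mul r u (R.mul s v w) = R.mul s v (R.mul r u w))
    {n : ℤ} (hn : 0 ≤ n) : R.mul n u v = 0 := by
  calc R.mul n u v = R.mul n u (R.mul (-1) v R.one) := by rw [R.vac_create]
    _ = R.mul (-1) v (R.mul n u R.one) := hcomm n (-1) R.one
    _ = 0 := by rw [R.vac_ann u n hn, R.mul_zero_right]

lemma commute_of_mul_eq_zero {u v : V} (hvan : ∀ n : ℤ, 0 ≤ n → R.mul n u v = 0)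
    (r s : ℤ) (w : V) : R.mul r u (R.mul s v w) = R.mul s v (R.mul r u w) := by
  rw [← sub_eq_zero, R.mul_sub_mul_eq_finsum]
  exact finsum_eq_zero_of_forall_eq_zero fun i => by
    rw [hvan i i.cast_nonneg, R.mul_zero_left, smul_zero]

end VertexRing

/-- The modes of `u` and `v` commute iff `u(n)v = 0` for all `n ≥ 0`. -/
theorem commuting_modes_iff {V : Type*} [AddCommGroup V] (R : VertexRing V) (u v : V) :
    (∀ (r s : ℤ) (w : V), R.mul r u (R.mul s v w) = R.mul s v (R.mul r u w)) ↔
    (∀ n : ℤ, 0 ≤ n → R.mul n u v = 0) :=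
  ⟨fun hcomm _ hn => R.mul_eq_zero_of_commute hcomm hn, R.commute_of_mul_eq_zero⟩
end
end
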